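/- Let d ≥ 5 be an integer and let h = t₀·h′ where h′ ∈ ℂ[t₀,t₁] is homogeneous of degree d−5 with h′(0,1) ≠ 0 (equivalently t₀ does not divide h′). Then t₀²·(h·V₂ + t₀²·V_{d−4}) = t₀⁴·V_{d−4} + ℂ·t₀³t₁^{d−3}, and this ℂ-subspace has dimension d−2. -/

import Mathlib

open MvPolynomial

noncomputable section

/-- `V n` is the space of homogeneous polynomials of degree `n` in `ℂ[t₀,t₁]`. -/
abbrev V (n : ℕ) : Submodule ℂ (MvPolynomial (Fin 2) ℂ) :=
  MvPolynomial.homogeneousSubmodule (Fin 2) ℂ n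

lemma mon_eq (a b : ℕ) :
    (X 0 : MvPolynomial (Fin 2) ℂ) ^ a * X 1 ^ b
      = monomial (Finsupp.single 0 a + Finsupp.single 1 b) 1 := by
  rw [X_pow_eq_monomial, X_pow_eq_monomial, monomial_mul, one_mul]

lemma fin2_decomp (d : Fin 2 →₀ ℕ) :
    d = Finsupp.single 0 (d 0) + Finsupp.single 1 (d 1) := by
  ext i; fin_cases i <;> simp [Finsupp.single_apply]

lemma degree_fin2 (d : Fin 2 →₀ ℕ) : d.degree = d 0 + d 1 := by
  rw [Finsupp.degree_apply, Finset.sum_subset (Finset.subset_univ _)]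
  · simp [Fin.sum_univ_two]
  · intro x _ hx
    simpa using Finsupp.notMem_support_iff.mp hx

lemma V_span (n : ℕ) :
    V n = Submodule.span ℂ (Set.range fun i : Fin (n+1) =>
      (X 0 : MvPolynomial (Fin 2) ℂ) ^ (i : ℕ) * X 1 ^ (n - (i : ℕ))) := by
  apply le_antisymm
  · intro p hp
    rw [mem_homogeneousSubmodule] at hp
    rw [← p.support_sum_monomial_coeff]
    apply Submodule.sum_mem
    intro d hd
    have hdeg : d 0 + d 1 = n := by
      rw [← degree_fin2]
      have := hp (mem_support_iff.mp hd)
      rw [Finsupp.degree_eq_weight_one]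
      exact this
    have hle : (d 0 : ℕ) < n + 1 := by omega
    have key : monomial d (coeff d p)
        = coeff d p • ((X 0 : MvPolynomial (Fin 2) ℂ) ^ (d 0) * X 1 ^ (n - d 0)) := by
      rw [mon_eq]
      have h1 : n - d 0 = d 1 := by omega
      rw [h1, ← fin2_decomp, smul_monomial, smul_eq_mul, mul_one]
    rw [key]
    exact Submodule.smul_mem _ _ (Submodule.subset_span ⟨⟨d 0, hle⟩, rfl⟩)
  · rw [Submodule.span_le]
    rintro _ ⟨i, rfl⟩
    have hin : (i : ℕ) + (n - (i : ℕ)) = n := by omega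
    have h1 : ((X 0 : MvPolynomial (Fin 2) ℂ) ^ (i:ℕ) * X 1 ^ (n - (i:ℕ))).IsHomogeneous
        ((i:ℕ) + (n - (i:ℕ))) :=
      (isHomogeneous_X_pow _ _).mul (isHomogeneous_X_pow _ _)
    rw [hin] at h1
    exact h1

lemma V_finrank (n : ℕ) : Module.finrank ℂ (V n) = n + 1 := by
  rw [V_span]
  have hinj : Function.Injective (fun i : Fin (n+1) =>
      Finsupp.single (0 : Fin 2) (i : ℕ) + Finsupp.single 1 (n - (i : ℕ))) := by
    intro a b hab
    have := congrFun (congrArg (fun f : Fin 2 →₀ ℕ => (f : Fin 2 → ℕ)) hab) 0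
    simp [Finsupp.single_apply] at this
    exact Fin.ext this
  have hli : LinearIndependent ℂ (fun i : Fin (n+1) =>
      (X 0 : MvPolynomial (Fin 2) ℂ) ^ (i:ℕ) * X 1 ^ (n - (i:ℕ))) := by
    have := ((basisMonomials (Fin 2) ℂ).linearIndependent).comp _ hinj
    simpa [mon_eq, coe_basisMonomials, Function.comp_def] using this
  rw [finrank_span_eq_card hli, Fintype.card_fin]

lemma decomp (m : ℕ) (h' : MvPolynomial (Fin 2) ℂ) (hh' : h' ∈ V m) :
    ∃ g : MvPolynomial (Fin 2) ℂ, g * X 1 ^ 2 ∈ V (m + 1) ∧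
      h' = X 0 * g + C (eval ![0,1] h') * X 1 ^ m := by
  rw [V_span] at hh'
  obtain ⟨c, hc⟩ := Submodule.mem_span_range_iff_exists_fun ℂ |>.mp hh'
  set g : MvPolynomial (Fin 2) ℂ :=
    ∑ j : Fin m, c j.succ • ((X 0) ^ (j : ℕ) * X 1 ^ (m - ((j : ℕ) + 1))) with hgdef
  refine ⟨g, ?_, ?_⟩
  · rw [Finset.sum_mul]
    apply Submodule.sum_mem
    intro j _
    rw [smul_mul_assoc]
    apply Submodule.smul_mem
    have he : (X 0 : MvPolynomial (Fin 2) ℂ) ^ (j:ℕ) * X 1 ^ (m - ((j:ℕ)+1)) * X 1 ^ 2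
        = X 0 ^ (j:ℕ) * X 1 ^ ((m+1) - (j:ℕ)) := by
      rw [mul_assoc, ← pow_add]
      congr 2
      have := j.isLt
      omega
    rw [he, V_span (m+1)]
    exact Submodule.subset_span ⟨⟨j, by have := j.isLt; omega⟩, rfl⟩
  · have hc0 : eval ![0,1] h' = c 0 := by
      rw [← hc]
      simp only [map_sum, smul_eq_C_mul, map_mul, map_pow, eval_C, eval_X]
      rw [Fin.sum_univ_succ]
      simp
    have hg : X 0 * g = ∑ j : Fin m,
        c j.succ • ((X 0 : MvPolynomial (Fin 2) ℂ) ^ ((j:ℕ)+1) * X 1 ^ (m - ((j:ℕ)+1))) := by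
      rw [hgdef, Finset.mul_sum]
      refine Finset.sum_congr rfl fun j _ => ?_
      rw [mul_smul_comm]
      congr 1
      ring
    rw [hc0, ← hc, Fin.sum_univ_succ, hg]
    simp only [Fin.val_succ, Fin.val_zero, pow_zero, one_mul, Nat.sub_zero, smul_eq_C_mul]
    ring

/-- Case 2-1 of Proposition 4.1: for `h = t₀·h'` with `h'` homogeneous of degree
`d-5` and `h'(0,1) ≠ 0`,
`t₀²·(h·V₂ + t₀²·V_{d-4}) = t₀⁴·V_{d-4} + ℂ·t₀³t₁^{d-3}`, of dimension `d-2`. -/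
theorem statement9 (d : ℕ) (hd : 5 ≤ d)
    (h h' : MvPolynomial (Fin 2) ℂ)
    (hh' : h' ∈ V (d - 5))
    (hne : MvPolynomial.eval ![0, 1] h' ≠ 0)
    (hh : h = X 0 * h') :
    ((V 2).map (LinearMap.mulLeft ℂ h) ⊔
        (V (d - 4)).map (LinearMap.mulLeft ℂ ((X 0 : MvPolynomial (Fin 2) ℂ) ^ 2))).map
        (LinearMap.mulLeft ℂ ((X 0 : MvPolynomial (Fin 2) ℂ) ^ 2))
      = (V (d - 4)).map (LinearMap.mulLeft ℂ ((X 0 : MvPolynomial (Fin 2) ℂ) ^ 4)) ⊔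
        Submodule.span ℂ {(X 0 : MvPolynomial (Fin 2) ℂ) ^ 3 * X 1 ^ (d - 3)} ∧
    Module.finrank ℂ
        ↥(((V 2).map (LinearMap.mulLeft ℂ h) ⊔
            (V (d - 4)).map (LinearMap.mulLeft ℂ ((X 0 : MvPolynomial (Fin 2) ℂ) ^ 2))).map
            (LinearMap.mulLeft ℂ ((X 0 : MvPolynomial (Fin 2) ℂ) ^ 2)))
      = d - 2 := by
  obtain ⟨m, rfl⟩ : ∃ m, d = m + 5 := ⟨d - 5, by omega⟩
  have e1 : m + 5 - 5 = m := by omega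
  have e2 : m + 5 - 4 = m + 1 := by omega
  have e3 : m + 5 - 3 = m + 2 := by omega
  have e4 : m + 5 - 2 = m + 3 := by omega
  rw [e1] at hh'
  rw [e2, e3, e4]
  obtain ⟨g, hg, hdec⟩ := decomp m h' hh'
  set c : ℂ := eval ![0,1] h' with hcdef
  set T0 : MvPolynomial (Fin 2) ℂ := X 0 with hT0
  set T1 : MvPolynomial (Fin 2) ℂ := X 1 with hT1
  have hmapmap : ∀ (p q : MvPolynomial (Fin 2) ℂ) (S : Submodule ℂ (MvPolynomial (Fin 2) ℂ)),
      (S.map (LinearMap.mulLeft ℂ q)).map (LinearMap.mulLeft ℂ p)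
        = S.map (LinearMap.mulLeft ℂ (p * q)) := by
    intro p q S
    rw [LinearMap.mulLeft_mul, Submodule.map_comp]
  have hX4 : T0 ^ 2 * T0 ^ 2 = T0 ^ 4 := by ring
  rw [Submodule.map_sup, hmapmap, hmapmap, hX4]
  set A : Submodule ℂ (MvPolynomial (Fin 2) ℂ) :=
    (V (m+1)).map (LinearMap.mulLeft ℂ (T0 ^ 4)) with hA
  set s : MvPolynomial (Fin 2) ℂ := T0 ^ 3 * T1 ^ (m + 2) with hs
  have hkey : (T0 ^ 2 * h) * T1 ^ 2 = T0 ^ 4 * (g * T1 ^ 2) + c • s := by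
    rw [hh, hdec, smul_eq_C_mul, hs]
    ring
  have main : (V 2).map (LinearMap.mulLeft ℂ (T0 ^ 2 * h)) ⊔ A
      = A ⊔ Submodule.span ℂ {s} := by
    apply le_antisymm
    · refine sup_le ?_ le_sup_left
      rw [V_span 2, Submodule.map_span, Submodule.span_le]
      rintro _ ⟨_, ⟨i, rfl⟩, rfl⟩
      simp only [LinearMap.mulLeft_apply]
      fin_cases i
      · simp only [Fin.val_zero, pow_zero, one_mul, Nat.sub_zero]
        rw [← hT1, hkey]
        refine add_mem (Submodule.mem_sup_left ⟨g * T1 ^ 2, hg, rfl⟩) ?_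
        exact Submodule.mem_sup_right (Submodule.smul_mem _ _
          (Submodule.subset_span rfl))
      · refine Submodule.mem_sup_left ⟨h' * T1, ?_, ?_⟩
        · have : (h' * T1).IsHomogeneous (m + 1) := hh'.mul (isHomogeneous_X _ _)
          exact this
        · simp only [LinearMap.mulLeft_apply]
          rw [hh]
          ring
      · refine Submodule.mem_sup_left ⟨T0 * h', ?_, ?_⟩
        · have : (T0 * h').IsHomogeneous (1 + m) := (isHomogeneous_X _ _).mul hh'
          rw [add_comm] at this
          exact this
        · simp only [LinearMap.mulLeft_apply]
          rw [hh]
          ring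
    · refine sup_le le_sup_right ?_
      rw [Submodule.span_le, Set.singleton_subset_iff]
      have h1 : (T0 ^ 2 * h) * T1 ^ 2 ∈
          (V 2).map (LinearMap.mulLeft ℂ (T0 ^ 2 * h)) := by
        refine ⟨T1 ^ 2, ?_, rfl⟩
        exact isHomogeneous_X_pow _ _
      have h2 : T0 ^ 4 * (g * T1 ^ 2) ∈ A := ⟨g * T1 ^ 2, hg, rfl⟩
      have : s = c⁻¹ • ((T0 ^ 2 * h) * T1 ^ 2) - c⁻¹ • (T0 ^ 4 * (g * T1 ^ 2)) := by
        rw [hkey, smul_add, add_sub_cancel_left, smul_smul, inv_mul_cancel₀ hne, one_smul]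
      rw [this]
      exact sub_mem (Submodule.smul_mem _ _ (Submodule.mem_sup_left h1))
        (Submodule.smul_mem _ _ (Submodule.mem_sup_right h2))
  refine ⟨main, ?_⟩
  rw [main]
  have hX0ne : (T0 : MvPolynomial (Fin 2) ℂ) ≠ 0 := X_ne_zero _
  have hsne : s ≠ 0 := mul_ne_zero (pow_ne_zero _ hX0ne) (pow_ne_zero _ (X_ne_zero _))
  have hinj : Function.Injective (LinearMap.mulLeft ℂ (T0 ^ 4)) := by
    intro a b hab
    exact mul_left_cancel₀ (pow_ne_zero 4 hX0ne) hab
  have hsA : s ∉ A := by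
    rintro ⟨q, hq, hq2⟩
    simp only [LinearMap.mulLeft_apply] at hq2
    have h3 : T0 ^ 3 * (T0 * q) = T0 ^ 3 * T1 ^ (m + 2) := by
      rw [← hs, ← hq2]; ring
    have h4 : T0 * q = T1 ^ (m + 2) := mul_left_cancel₀ (pow_ne_zero 3 hX0ne) h3
    have h5 := congrArg (eval ![0,1]) h4
    simp [hT0, hT1] at h5
  have hfdV : FiniteDimensional ℂ (V (m+1)) := by
    rw [V_span]
    exact FiniteDimensional.span_of_finite ℂ (Set.finite_range _)
  have hfdA : FiniteDimensional ℂ A := Module.Finite.map _ _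
  have hfdS : FiniteDimensional ℂ (Submodule.span ℂ {s}) := by infer_instance
  have hinf : A ⊓ Submodule.span ℂ {s} = ⊥ := by
    rw [eq_bot_iff]
    rintro x ⟨hxA, hxs⟩
    obtain ⟨a, rfl⟩ := Submodule.mem_span_singleton.mp hxs
    rcases eq_or_ne a 0 with rfl | ha
    · simp
    · exact absurd ((Submodule.smul_mem_iff _ ha).mp hxA) hsA
  have hrA : Module.finrank ℂ A = m + 2 := by
    rw [← LinearEquiv.finrank_eq (Submodule.equivMapOfInjective _ hinj (V (m+1)))]
    rw [V_finrank]
  have hrs : Module.finrank ℂ (Submodule.span ℂ ({s} : Set (MvPolynomial (Fin 2) ℂ))) = 1 :=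
    finrank_span_singleton hsne
  have := Submodule.finrank_sup_add_finrank_inf_eq A (Submodule.span ℂ {s})
  rw [hinf, hrA, hrs, finrank_bot] at this
  omega
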